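/- Let K be a field of characteristic 2 and n even. Then the natural permutation module K^n of S_n is indecomposable. -/
import Mathlib


/-- A submodule of the natural permutation module `K^n` is invariant under the
permutation action of `Sₙ` (acting by permuting coordinates). -/
def PermInvariant {K : Type*} [Field K] {n : ℕ}
    (p : Submodule K (Fin n → K)) : Prop :=
  ∀ g : Equiv.Perm (Fin n), ∀ v ∈ p, v ∘ ⇑g ∈ p

/-- There is a permutation sending any ordered pair of distinct points to any other. -/
lemma exists_perm_map_pair {n : ℕ} {i j k l : Fin n} (hij : i ≠ j) (hkl : k ≠ l) :
    ∃ σ : Equiv.Perm (Fin n), σ k = i ∧ σ l = j := by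
  refine ⟨(Equiv.swap k i).trans (Equiv.swap ((Equiv.swap k i) l) j), ?_, ?_⟩
  · simp only [Equiv.trans_apply, Equiv.swap_apply_left]
    apply Equiv.swap_apply_of_ne_of_ne
    · intro h
      apply hkl
      have := congrArg (Equiv.swap k i) h
      simpa using this
    · exact hij
  · simp [Equiv.trans_apply, Equiv.swap_apply_left]

/-- If an invariant submodule contains one sum `eᵢ + eⱼ` (`i ≠ j`), it contains all of them. -/
lemma pair_mem_of_pair_mem {K : Type*} [Field K] {n : ℕ} {p : Submodule K (Fin n → K)}
    (hp : PermInvariant p) {i j : Fin n} (hij : i ≠ j)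
    (hm : (Pi.single i 1 + Pi.single j 1 : Fin n → K) ∈ p)
    {k l : Fin n} (hkl : k ≠ l) : (Pi.single k 1 + Pi.single l 1 : Fin n → K) ∈ p := by
  obtain ⟨σ, hk, hl⟩ := exists_perm_map_pair hij hkl
  have hmem := hp σ _ hm
  have heq : ((Pi.single i 1 + Pi.single j 1 : Fin n → K)) ∘ ⇑σ
      = (Pi.single k 1 + Pi.single l 1 : Fin n → K) := by
    funext x
    simp only [Function.comp_apply, Pi.add_apply, Pi.single_apply, ← hk, ← hl,
      Equiv.apply_eq_iff_eq]
  rwa [heq] at hmem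

/-- Every nonzero invariant submodule contains the all-ones vector
(char 2, `n` even). -/
lemma one_mem_of_invariant {K : Type*} [Field K] [CharP K 2] {n : ℕ}
    (hn : 0 < n) (he : Even n) {p : Submodule K (Fin n → K)}
    (hp : PermInvariant p) (hne : p ≠ ⊥) : (fun _ => (1 : K)) ∈ p := by
  haveI : NeZero n := ⟨hn.ne'⟩
  obtain ⟨v, hv, hv0⟩ := Submodule.exists_mem_ne_zero_of_ne_bot hne
  by_cases hc : ∀ i j : Fin n, v i = v j
  · -- v is a nonzero constant
    have hc0 : v 0 ≠ 0 := by
      intro h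
      apply hv0
      funext i
      simp only [Pi.zero_apply]
      rw [hc i 0, h]
    have : (fun _ => (1 : K)) = (v 0)⁻¹ • v := by
      funext x
      simp [hc x 0, inv_mul_cancel₀ hc0]
    rw [this]
    exact p.smul_mem _ hv
  · push_neg at hc
    obtain ⟨i, j, hvij⟩ := hc
    have hij : i ≠ j := by rintro rfl; exact hvij rfl
    set c : K := v i - v j with hcdef
    have hc0 : c ≠ 0 := sub_ne_zero.mpr hvij
    -- v - v ∘ swap i j = c • (eᵢ + eⱼ) in characteristic 2
    have hswap : v - v ∘ ⇑(Equiv.swap i j) ∈ p :=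
      p.sub_mem hv (hp (Equiv.swap i j) v hv)
    have heq : Pi.single i (1 : K) + Pi.single j (1 : K)
        = c⁻¹ • (v - v ∘ ⇑(Equiv.swap i j)) := by
      funext x
      simp only [Pi.add_apply, Pi.single_apply, Pi.smul_apply, Pi.sub_apply,
        Function.comp_apply, smul_eq_mul, Equiv.swap_apply_def]
      split_ifs with h1 h2 h3
      · exact absurd (h1.symm.trans h2) hij
      · rw [h1, ← hcdef, inv_mul_cancel₀ hc0]; norm_num
      · have hvji : v j - v i = c := by rw [← CharTwo.neg_eq c, hcdef]; ring
        rw [h3, hvji, inv_mul_cancel₀ hc0]; norm_num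
      · simp
    have hpair : Pi.single i (1 : K) + Pi.single j (1 : K) ∈ p := by
      rw [heq]; exact p.smul_mem _ hswap
    -- now sum up:  1 = ∑_{k ≠ 0} (e₀ + e_k)  in char 2 with n even
    have hsum : (fun _ => (1 : K))
        = ∑ k ∈ Finset.univ.erase (0 : Fin n), (Pi.single 0 (1 : K) + Pi.single k 1) := by
      funext x
      rw [Finset.sum_apply]
      simp only [Pi.add_apply, Pi.single_apply]
      rw [Finset.sum_add_distrib, Finset.sum_const, Finset.sum_ite_eq,
        Finset.card_erase_of_mem (Finset.mem_univ _), Finset.card_univ, Fintype.card_fin]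
      have hnK : ((n : K)) = 0 := (CharP.cast_eq_zero_iff K 2 n).mpr he.two_dvd
      rcases eq_or_ne x 0 with rfl | hx0
      · rw [if_pos rfl, if_neg (by simp)]
        have : ((n - 1 : ℕ) : K) = 1 := by
          rw [Nat.cast_sub hn, Nat.cast_one, hnK, zero_sub, CharTwo.neg_eq]
        simp [this]
      · rw [if_neg hx0, if_pos (by simp [hx0])]
        simp
    rw [hsum]
    apply p.sum_mem
    intro k hk
    have hk0 : (0 : Fin n) ≠ k := fun h => (Finset.mem_erase.mp hk).1 h.symm
    exact pair_mem_of_pair_mem hp hij hpair hk0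

/-- Let `K` be a field of characteristic 2 and `n` even (and positive). Then the natural
permutation module `K^n` of `Sₙ` is indecomposable: it is nonzero, and whenever it is
the internal direct sum of two invariant submodules, one of them is zero. -/
theorem permutationModule_indecomposable_of_even {K : Type*} [Field K] [CharP K 2]
    {n : ℕ} (hn : 0 < n) (he : Even n) :
    (⊤ : Submodule K (Fin n → K)) ≠ ⊥ ∧
    ∀ p q : Submodule K (Fin n → K),
      PermInvariant p → PermInvariant q → IsCompl p q → p = ⊥ ∨ q = ⊥ := by
  haveI : NeZero n := ⟨hn.ne'⟩
  have hone : (fun _ => (1 : K)) ≠ (0 : Fin n → K) := by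
    intro h
    exact one_ne_zero (congrFun h 0)
  constructor
  · intro h
    have : (fun _ => (1 : K)) ∈ (⊥ : Submodule K (Fin n → K)) := h ▸ Submodule.mem_top
    exact hone (Submodule.mem_bot K |>.mp this)
  · intro p q hp hq hcompl
    by_contra hcon
    push_neg at hcon
    obtain ⟨hpne, hqne⟩ := hcon
    have h1p := one_mem_of_invariant hn he hp hpne
    have h1q := one_mem_of_invariant hn he hq hqne
    have : (fun _ => (1 : K)) ∈ p ⊓ q := ⟨h1p, h1q⟩
    rw [hcompl.inf_eq_bot] at this
    exact hone (Submodule.mem_bot K |>.mp this)
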